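/- Let μ₁, μ₂ ∈ ℂ and let z₁ and z₂ be independent complex random variables such that, for i = 1, 2, Re(z_i) and Im(z_i) are independent real Gaussian random variables with means Re(μ_i) and Im(μ_i) respectively and common variance 1/2. Then E[ z₁ · conj(csgn(z₂)) ] = μ₁ · ( Φ(Re μ₂) − i·Φ(Im μ₂) ). -/

import Mathlib

/-!
Independence factors the expectation as `E[z₁] · conj E[csgn z₂]`, and `E[z₁] = μ₁`. The real and
imaginary parts of `z₂` are Gaussians `N(m, 1/2)`, so each component of `E[csgn z₂]` has the form
`∫ sgn(t + m) φ(t) dt` with `φ` the centred density. As `φ` is even, the tail `t < -m` cancels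
against the tail `t > m`, leaving `∫_{-m}^{m} φ = 2 ∫_0^m φ = Φ(m)`.
-/

open MeasureTheory ProbabilityTheory
open scoped NNReal

/-- The error function `Φ(x) = (2/√π) ∫₀ˣ exp(−t²) dt`. -/
noncomputable def erf (x : ℝ) : ℝ :=
  2 / Real.sqrt Real.pi * ∫ t in (0 : ℝ)..x, Real.exp (-t ^ 2)

/-- The complex sign map `csgn(z) = sgn(Re z) + i sgn(Im z)`. -/
noncomputable def csgn (z : ℂ) : ℂ :=
  (Real.sign z.re : ℂ) + (Real.sign z.im : ℂ) * Complex.I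

/-- The law of a complex random variable whose real and imaginary parts are
independent real Gaussians with means `Re μ`, `Im μ` and common variance `1/2`. -/
noncomputable def complexGaussian (μ : ℂ) : Measure ℂ :=
  ((gaussianReal μ.re (1 / 2)).prod (gaussianReal μ.im (1 / 2))).map
    fun p => (p.1 : ℂ) + (p.2 : ℂ) * Complex.I

open Real Set

@[fun_prop]
theorem Real.measurable_sign : Measurable Real.sign :=
  Measurable.ite (measurableSet_lt measurable_id measurable_const) measurable_const
    (Measurable.ite (measurableSet_lt measurable_const measurable_id) measurable_const
      measurable_const)

theorem Real.abs_sign_le_one (r : ℝ) : |Real.sign r| ≤ 1 := by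
  rcases Real.sign_apply_eq r with h | h | h <;> simp [h]

theorem integral_sign_smul_comp_sub {E : Type*} [NormedAddCommGroup E] [NormedSpace ℝ E]
    {g : ℝ → E} (hg : Integrable g) (heven : ∀ x, g (-x) = g x) (m : ℝ) :
    ∫ x, Real.sign x • g (x - m) = (2 : ℝ) • ∫ t in 0..m, g t := by
  have hsg : Integrable fun t => Real.sign (t + m) • g t :=
    hg.bdd_smul 1 (measurable_sign.comp (measurable_add_const m)).aestronglyMeasurable
      (ae_of_all _ fun t => by simpa using abs_sign_le_one (t + m))
  have hleft : ∫ t in Iic (-m), Real.sign (t + m) • g t = -∫ t in Ioi m, g t := by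
    rw [integral_Iic_eq_integral_Iio, ← MeasureTheory.integral_neg,
      setIntegral_congr_fun measurableSet_Iio fun t ht => by
        rw [Real.sign_of_neg (lt_neg_iff_add_neg.mp ht), neg_one_smul],
      ← integral_Iic_eq_integral_Iio, ← integral_comp_neg_Ioi]
    simp only [heven]
  have hright : ∫ t in Ioi (-m), Real.sign (t + m) • g t = ∫ t in Ioi (-m), g t :=
    setIntegral_congr_fun measurableSet_Ioi fun t ht => by
      rw [Real.sign_of_pos (neg_lt_iff_pos_add.mp ht), one_smul]
  have hsymm : ∫ t in (-m)..0, g t = ∫ t in 0..m, g t := by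
    simpa [heven] using (intervalIntegral.integral_comp_neg (a := 0) (b := m) g).symm
  calc ∫ x, Real.sign x • g (x - m) = ∫ t, Real.sign (t + m) • g t := by
        simpa using integral_sub_right_eq_self (fun t => Real.sign (t + m) • g t) m
    _ = (∫ t in Ioi (-m), g t) - ∫ t in Ioi m, g t := by
        rw [← intervalIntegral.integral_Iic_add_Ioi hsg.integrableOn hsg.integrableOn, hleft,
          hright, neg_add_eq_sub]
    _ = (∫ t in (-m)..0, g t) + ∫ t in 0..m, g t := by
        rw [intervalIntegral.integral_Ioi_sub_Ioi' hg.integrableOn hg.integrableOn,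
          intervalIntegral.integral_add_adjacent_intervals hg.intervalIntegrable
            hg.intervalIntegrable]
    _ = (2 : ℝ) • ∫ t in 0..m, g t := by rw [hsymm, two_smul]

theorem gaussianPDFReal_zero_half (t : ℝ) :
    gaussianPDFReal 0 (1 / 2) t = (√π)⁻¹ * exp (-t ^ 2) := by
  rw [gaussianPDFReal]
  norm_num
  field_simp

theorem erf_eq_two_mul_integral_gaussianPDFReal (m : ℝ) :
    erf m = 2 * ∫ t in 0..m, gaussianPDFReal 0 (1 / 2) t := by
  simp_rw [erf, gaussianPDFReal_zero_half, intervalIntegral.integral_const_mul]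
  ring

theorem integral_sign_gaussianReal_half (m : ℝ) :
    ∫ x, Real.sign x ∂gaussianReal m (1 / 2) = erf m := by
  have hpdf (x : ℝ) : gaussianPDFReal m (1 / 2) x • Real.sign x
      = Real.sign x • gaussianPDFReal 0 (1 / 2) (x - m) := by
    rw [gaussianPDFReal_sub, zero_add, smul_eq_mul, smul_eq_mul, mul_comm]
  have heven (x : ℝ) : gaussianPDFReal 0 (1 / 2) (-x) = gaussianPDFReal 0 (1 / 2) x := by
    simp [gaussianPDFReal]
  rw [integral_gaussianReal_eq_integral_smul (by norm_num)]
  simp_rw [hpdf]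
  rw [integral_sign_smul_comp_sub (integrable_gaussianPDFReal 0 _) heven,
    erf_eq_two_mul_integral_gaussianPDFReal, smul_eq_mul]

theorem complexGaussian_eq_map_equivRealProdCLM (μ : ℂ) :
    complexGaussian μ = ((gaussianReal μ.re (1 / 2)).prod (gaussianReal μ.im (1 / 2))).map
      Complex.equivRealProdCLM.symm := by
  rw [complexGaussian]
  congr 1
  exact funext fun p => (Complex.equivRealProdCLM_symm_apply p).symm

instance (μ : ℂ) : IsGaussian (complexGaussian μ) := by
  rw [complexGaussian_eq_map_equivRealProdCLM]
  infer_instance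

theorem map_re_complexGaussian (μ : ℂ) :
    (complexGaussian μ).map Complex.re = gaussianReal μ.re (1 / 2) := by
  have hre : Complex.re ∘ (fun p : ℝ × ℝ => (p.1 : ℂ) + (p.2 : ℂ) * Complex.I) = Prod.fst := by
    ext p; simp
  rw [complexGaussian, Measure.map_map Complex.measurable_re (by fun_prop), hre,
    Measure.map_fst_prod]
  simp

theorem map_im_complexGaussian (μ : ℂ) :
    (complexGaussian μ).map Complex.im = gaussianReal μ.im (1 / 2) := by
  have him : Complex.im ∘ (fun p : ℝ × ℝ => (p.1 : ℂ) + (p.2 : ℂ) * Complex.I) = Prod.snd := by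
    ext p; simp
  rw [complexGaussian, Measure.map_map Complex.measurable_im (by fun_prop), him,
    Measure.map_snd_prod]
  simp

section
variable {E : Type*} [NormedAddCommGroup E] [NormedSpace ℝ E] (μ : ℂ) {f : ℝ → E}

theorem integral_comp_re_complexGaussian
    (hf : AEStronglyMeasurable f (gaussianReal μ.re (1 / 2))) :
    ∫ z, f z.re ∂complexGaussian μ = ∫ x, f x ∂gaussianReal μ.re (1 / 2) := by
  rw [← map_re_complexGaussian] at hf ⊢
  exact (integral_map Complex.measurable_re.aemeasurable hf).symm

theorem integral_comp_im_complexGaussian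
    (hf : AEStronglyMeasurable f (gaussianReal μ.im (1 / 2))) :
    ∫ z, f z.im ∂complexGaussian μ = ∫ x, f x ∂gaussianReal μ.im (1 / 2) := by
  rw [← map_im_complexGaussian] at hf ⊢
  exact (integral_map Complex.measurable_im.aemeasurable hf).symm

end

theorem integral_id_complexGaussian (μ : ℂ) : ∫ z, z ∂complexGaussian μ = μ := by
  have hint : Integrable id (complexGaussian μ) := IsGaussian.integrable_id
  apply Complex.ext
  · exact (integral_re hint).symm.trans <|
      (integral_comp_re_complexGaussian μ aestronglyMeasurable_id).trans integral_id_gaussianReal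
  · exact (integral_im hint).symm.trans <|
      (integral_comp_im_complexGaussian μ aestronglyMeasurable_id).trans integral_id_gaussianReal

theorem measurable_csgn : Measurable csgn := by
  unfold csgn
  fun_prop

theorem norm_csgn_le (z : ℂ) : ‖csgn z‖ ≤ 2 := by
  calc ‖csgn z‖ ≤ |Real.sign z.re| + |Real.sign z.im| := by
        simpa [csgn] using Complex.norm_le_abs_re_add_abs_im (csgn z)
    _ ≤ 2 := by linarith [abs_sign_le_one z.re, abs_sign_le_one z.im]

theorem integrable_csgn (P : Measure ℂ) [IsFiniteMeasure P] : Integrable csgn P :=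
  .of_bound measurable_csgn.aestronglyMeasurable 2 (ae_of_all _ norm_csgn_le)

theorem integral_csgn_complexGaussian (μ : ℂ) :
    ∫ z, csgn z ∂complexGaussian μ = erf μ.re + erf μ.im * Complex.I := by
  have hint := integrable_csgn (complexGaussian μ)
  apply Complex.ext
  · have hre : (∫ z, csgn z ∂complexGaussian μ).re = ∫ z, Real.sign z.re ∂complexGaussian μ := by
      simpa [csgn] using (integral_re hint).symm
    rw [hre, integral_comp_re_complexGaussian μ measurable_sign.aestronglyMeasurable,
      integral_sign_gaussianReal_half]
    simp
  · have him : (∫ z, csgn z ∂complexGaussian μ).im = ∫ z, Real.sign z.im ∂complexGaussian μ := by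
      simpa [csgn] using (integral_im hint).symm
    rw [him, integral_comp_im_complexGaussian μ measurable_sign.aestronglyMeasurable,
      integral_sign_gaussianReal_half]
    simp

/-- Off-diagonal case of equations (68)–(70): for independent `z₁, z₂` as above,
`E[z₁ · conj(csgn z₂)] = μ₁ (Φ(Re μ₂) − iΦ(Im μ₂))`. -/
theorem expectation_self_mul_conj_csgn_indep (μ₁ μ₂ : ℂ) :
    ∫ z : ℂ × ℂ, z.1 * (starRingEnd ℂ) (csgn z.2)
        ∂((complexGaussian μ₁).prod (complexGaussian μ₂)) =
      μ₁ * ((erf μ₂.re : ℂ) - (erf μ₂.im : ℂ) * Complex.I) := by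
  rw [integral_prod_mul (fun z : ℂ => z) (fun z => (starRingEnd ℂ) (csgn z)),
    integral_id_complexGaussian, integral_conj, integral_csgn_complexGaussian]
  simp [sub_eq_add_neg]
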